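/- Curvature transport under flow: let A be a differential graded Lie algebra over a field k of characteristic zero, let a ∈ A_{−1} be arbitrary, and let e ∈ A_0 have nilpotent adjoint action ad_e. Then κ(u_e(a)) = exp(−ad_e)(κ(a)), where κ(x) := ∂x + (1/2)[x,x] is the curvature. -/

import Mathlib

/-- A differential graded Lie algebra (DGLA) over a field `k` of characteristic zero:
a `ℤ`-graded `k`-vector space `A = ⊕ₙ Aₙ` with a bilinear bracket respecting the grading,
graded antisymmetry, the graded Jacobi identity, and a differential `∂` of degree `-1`
with `∂ ∘ ∂ = 0` satisfying the graded Leibniz rule. -/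
class DGLA (k : Type*) (A : Type*) [Field k] [CharZero k]
    [AddCommGroup A] [Module k A] where
  bracket : A →ₗ[k] A →ₗ[k] A
  grading : ℤ → Submodule k A
  isInternal : DirectSum.IsInternal grading
  bracket_mem : ∀ (m n : ℤ) (a b : A), a ∈ grading m → b ∈ grading n →
    bracket a b ∈ grading (m + n)
  bracket_antisymm : ∀ (m n : ℤ) (a b : A), a ∈ grading m → b ∈ grading n →
    bracket b a = -(((-1 : k) ^ (m * n)) • bracket a b)
  jacobi : ∀ (l m n : ℤ) (a b c : A), a ∈ grading l → b ∈ grading m → c ∈ grading n →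
    ((-1 : k) ^ (l * m)) • bracket (bracket b c) a
      + ((-1 : k) ^ (m * n)) • bracket (bracket c a) b
      + ((-1 : k) ^ (n * l)) • bracket (bracket a b) c = 0
  d : A →ₗ[k] A
  d_mem : ∀ (n : ℤ) (a : A), a ∈ grading n → d a ∈ grading (n - 1)
  d_sq : ∀ a : A, d (d a) = 0
  leibniz : ∀ (m : ℤ) (a b : A), a ∈ grading m →
    d (bracket a b) = bracket (d a) b + ((-1 : k) ^ m) • bracket a (d b)

namespace DGLA

variable (k : Type*) {A : Type*} [Field k] [CharZero k] [AddCommGroup A] [Module k A]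
  [DGLA k A]

/-- The differential `∂` of the DGLA. -/
noncomputable def D : A →ₗ[k] A := DGLA.d (k := k) (A := A)

/-- The bracket `[x, y]` of the DGLA. -/
noncomputable def br (x y : A) : A := DGLA.bracket (k := k) (A := A) x y

/-- The `n`-th graded piece `Aₙ`. -/
noncomputable def gr (n : ℤ) : Submodule k A := DGLA.grading (k := k) (A := A) n

/-- The adjoint operator `ad_x = [x, ·]`. -/
noncomputable def ad (x : A) : Module.End k A := DGLA.bracket (k := k) (A := A) x

/-- A *point*: an element of `A₋₁` satisfying the Maurer–Cartan equation
`∂a + (1/2)[a,a] = 0`. -/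
def IsPoint (a : A) : Prop :=
  a ∈ gr k (-1) ∧ D k a + (2⁻¹ : k) • br k a a = 0

/-- The twisted differential `∂_a = ∂ + ad_a`. -/
noncomputable def twistD (a : A) : Module.End k A := D k + ad k a

/-- The curvature `κ(a) = ∂a + (1/2)[a,a]`. -/
noncomputable def curv (a : A) : A := D k a + (2⁻¹ : k) • br k a a

/-- The truncated operator power series `Σ_{n<N} (−1)ⁿ fⁿ/n!`; when `f^N = 0` this is the
exponential `exp(−f)` (a finite sum by nilpotency). -/
noncomputable def expNeg (f : Module.End k A) (N : ℕ) : Module.End k A :=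
  ∑ n ∈ Finset.range N, ((-1 : k) ^ n * (Nat.factorial n : k)⁻¹) • f ^ n

/-- The truncated operator power series `F(f) = Σ_{n<N} (−1)ⁿ fⁿ/(n+1)!`; when `f^N = 0`
this is the power series of `(1 − e^{−T})/T` evaluated at `f` (a finite sum by nilpotency). -/
noncomputable def Fser (f : Module.End k A) (N : ℕ) : Module.End k A :=
  ∑ n ∈ Finset.range N, ((-1 : k) ^ n * (Nat.factorial (n + 1) : k)⁻¹) • f ^ n

/-- The time-one flow `u_e(a) := exp(−ad_e)(a) + F(ad_e)(∂e)` of `e ∈ A₀` applied to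
`a ∈ A₋₁`, truncated at order `N` (exact when `(ad_e)^N = 0`). -/
noncomputable def flow (e : A) (N : ℕ) (a : A) : A :=
  expNeg k (ad k e) N a + Fser k (ad k e) N (D k e)

end DGLA

/-!
Let `u(t) = exp(-t ad_e) a + F(t ad_e)(t ∂e)`, a polynomial in `t` with `u(0) = a`, `u(1) = u_e(a)`
and `u' = ∂e - [e, u]`. Using `∂∂e = 0`, the Leibniz rule, the Jacobi identity and the symmetry
of the bracket on `A₋₁`, one finds `κ(u)' = -[e, κ(u)]`, so `κ(u(t)) = exp(-t ad_e) κ(a)`; put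
`t = 1`. Everything is done on the coefficients of `t ↦ u(t)` and `t ↦ κ(u(t))`, where the
differential equations become first-order recurrences.
-/

open DGLA Finset

section Coefficients

variable {k M : Type*} [Field k] [AddCommGroup M] [Module k M]

noncomputable def expNegCoeff (f : Module.End k M) (n : ℕ) (x : M) : M :=
  ((-1 : k) ^ n * (n.factorial : k)⁻¹) • (f ^ n) x

theorem expNegCoeff_zero (f : Module.End k M) (x : M) : expNegCoeff f 0 x = x := by
  simp [expNegCoeff]

theorem expNegCoeff_eq_zero {f : Module.End k M} {N n : ℕ} (hN : f ^ N = 0) (hn : N ≤ n)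
    (x : M) : expNegCoeff f n x = 0 := by
  simp [expNegCoeff, pow_eq_zero_of_le hn hN]

theorem expNegCoeff_mem {f : Module.End k M} {p : Submodule k M} (hf : ∀ x ∈ p, f x ∈ p)
    (n : ℕ) {x : M} (hx : x ∈ p) : expNegCoeff f n x ∈ p :=
  p.smul_mem _ (Module.End.pow_apply_mem_of_forall_mem n hf x hx)

theorem expNeg_apply_eq_sum {f : Module.End k M} {N M' : ℕ} (hN : f ^ N = 0) (hNM : N ≤ M')
    (x : M) : expNeg k f N x = ∑ n ∈ range M', expNegCoeff f n x := by
  rw [expNeg, LinearMap.sum_apply]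
  exact sum_subset (range_subset_range.mpr hNM) fun n _ hn ↦
    expNegCoeff_eq_zero hN (by simpa using hn) x

theorem Fser_apply (f : Module.End k M) (N : ℕ) (x : M) :
    Fser k f N x = ∑ n ∈ range N, ((n : k) + 1)⁻¹ • expNegCoeff f n x := by
  rw [Fser, LinearMap.sum_apply]
  refine sum_congr rfl fun n _ ↦ ?_
  rw [LinearMap.smul_apply, expNegCoeff, smul_smul, Nat.factorial_succ, Nat.cast_mul,
    Nat.cast_succ, mul_inv]
  ring_nf

/-- The coefficients of `t ↦ exp(-t f) a + F(t f)(t b)`. -/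
noncomputable def flowCoeff (f : Module.End k M) (a b : M) : ℕ → M
  | 0 => a
  | n + 1 => expNegCoeff f (n + 1) a + ((n : k) + 1)⁻¹ • expNegCoeff f n b

theorem flowCoeff_eq_zero {f : Module.End k M} {N n : ℕ} (hN : f ^ N = 0) (hn : N < n)
    (a b : M) : flowCoeff f a b n = 0 := by
  obtain ⟨n, rfl⟩ := Nat.exists_eq_add_one_of_ne_zero (Nat.ne_zero_of_lt hn)
  rw [flowCoeff, expNegCoeff_eq_zero hN hn.le, expNegCoeff_eq_zero hN (by omega), smul_zero,
    add_zero]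

theorem flowCoeff_mem {f : Module.End k M} {p : Submodule k M} (hf : ∀ x ∈ p, f x ∈ p)
    {a b : M} (ha : a ∈ p) (hb : b ∈ p) : ∀ n, flowCoeff f a b n ∈ p
  | 0 => ha
  | _ + 1 => p.add_mem (expNegCoeff_mem hf _ ha) (p.smul_mem _ (expNegCoeff_mem hf _ hb))

theorem sum_flowCoeff {f : Module.End k M} {N : ℕ} (hN : f ^ N = 0) (a b : M) :
    ∑ n ∈ range (N + 1), flowCoeff f a b n = expNeg k f N a + Fser k f N b := by
  rw [expNeg_apply_eq_sum hN N.le_succ, Fser_apply, sum_range_succ', sum_range_succ' _ N,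
    add_right_comm, ← sum_add_distrib]
  simp [flowCoeff, expNegCoeff_zero]

variable [CharZero k]

theorem succ_smul_expNegCoeff_succ (f : Module.End k M) (n : ℕ) (x : M) :
    ((n : k) + 1) • expNegCoeff f (n + 1) x = -f (expNegCoeff f n x) := by
  have hn : ((n : k) + 1) ≠ 0 := Nat.cast_add_one_ne_zero n
  rw [expNegCoeff, expNegCoeff, smul_smul, map_smul, pow_succ' f, Module.End.mul_apply,
    ← neg_smul, Nat.factorial_succ, Nat.cast_mul, Nat.cast_succ]
  congr 1
  field_simp
  ring

theorem eq_expNegCoeff_of_succ_smul {f : Module.End k M} {c : ℕ → M}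
    (hc : ∀ n : ℕ, ((n : k) + 1) • c (n + 1) = -f (c n)) (n : ℕ) :
    c n = expNegCoeff f n (c 0) := by
  induction n with
  | zero => rw [expNegCoeff_zero]
  | succ n ih =>
    apply smul_right_injective M (Nat.cast_add_one_ne_zero (R := k) n)
    simp only [hc, succ_smul_expNegCoeff_succ, ← ih]

theorem succ_smul_flowCoeff_succ (f : Module.End k M) (a b : M) (n : ℕ) :
    ((n : k) + 1) • flowCoeff f a b (n + 1) = -f (flowCoeff f a b n) + if n = 0 then b else 0 := by
  cases n with
  | zero => simp [flowCoeff, expNegCoeff]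
  | succ n =>
    have hb := (eq_inv_smul_iff₀ (Nat.cast_add_one_ne_zero n)).mpr
      (succ_smul_expNegCoeff_succ f n b)
    rw [flowCoeff, flowCoeff, smul_add, succ_smul_expNegCoeff_succ,
      smul_inv_smul₀ (Nat.cast_add_one_ne_zero (n + 1)), hb, map_add, map_smul,
      if_neg n.succ_ne_zero]
    module

end Coefficients

section Antidiagonal

theorem sum_range_sum_range_eq_sum_antidiagonal {M : Type*} [AddCommMonoid M] {N : ℕ}
    (g : ℕ → ℕ → M) (hg : ∀ i j, N < i ∨ N < j → g i j = 0) :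
    ∑ i ∈ range (N + 1), ∑ j ∈ range (N + 1), g i j
      = ∑ n ∈ range (2 * N + 1), ∑ p ∈ antidiagonal n, g p.1 p.2 := by
  simp_rw [Nat.sum_antidiagonal_eq_sum_range_succ g, sum_range_diag_flip]
  rw [← sum_subset (range_subset_range.mpr (by omega : N + 1 ≤ 2 * N + 1))
    fun i _ hi ↦ sum_eq_zero fun j _ ↦ hg i j (.inl (by simpa using hi))]
  refine sum_congr rfl fun i hi ↦ sum_subset (range_subset_range.mpr ?_)
    fun j _ hj ↦ hg i j (.inr (by simpa using hj))
  have := mem_range.mp hi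
  omega

/-- The Leibniz rule `(B(u, u))' = 2 B(u', u)` for a symmetric `B`, read on the coefficients of
`u(t) = ∑ uₙ tⁿ`. -/
theorem succ_smul_sum_antidiagonal_succ {R M N : Type*} [CommSemiring R] [AddCommMonoid M]
    [Module R M] [AddCommMonoid N] [Module R N] (B : M →ₗ[R] M →ₗ[R] N) {u : ℕ → M}
    (hB : ∀ i j, B (u i) (u j) = B (u j) (u i)) (n : ℕ) :
    ((n : R) + 1) • ∑ p ∈ antidiagonal (n + 1), B (u p.1) (u p.2)
      = (2 : R) • ∑ p ∈ antidiagonal n, B (((p.1 : R) + 1) • u (p.1 + 1)) (u p.2) := by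
  have hshift : ∑ p ∈ antidiagonal (n + 1), (p.1 : R) • B (u p.1) (u p.2)
      = ∑ p ∈ antidiagonal n, B (((p.1 : R) + 1) • u (p.1 + 1)) (u p.2) := by
    simp [Nat.sum_antidiagonal_succ]
  calc ((n : R) + 1) • ∑ p ∈ antidiagonal (n + 1), B (u p.1) (u p.2)
      = ∑ p ∈ antidiagonal (n + 1), ((p.1 : R) + p.2) • B (u p.1) (u p.2) := by
        rw [smul_sum]
        refine sum_congr rfl fun p hp ↦ ?_
        rw [HasAntidiagonal.mem_antidiagonal] at hp
        rw [← Nat.cast_add_one, ← hp, Nat.cast_add]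
    _ = ∑ p ∈ antidiagonal (n + 1), (p.1 : R) • B (u p.1) (u p.2)
          + ∑ p ∈ antidiagonal (n + 1), (p.2 : R) • B (u p.1) (u p.2) := by
        simp only [add_smul, sum_add_distrib]
    _ = (2 : R) • ∑ p ∈ antidiagonal (n + 1), (p.1 : R) • B (u p.1) (u p.2) := by
        rw [two_smul, ← Nat.sum_antidiagonal_swap (f := fun p ↦ (p.1 : R) • B (u p.1) (u p.2))]
        simp only [Prod.fst_swap, Prod.snd_swap, hB]
    _ = _ := by rw [hshift]

end Antidiagonal

namespace DGLA

variable {k A : Type*} [Field k] [CharZero k] [AddCommGroup A] [Module k A] [DGLA k A]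

theorem br_comm_of_odd {m n : ℤ} (hm : Odd m) (hn : Odd n) {x y : A} (hx : x ∈ gr k m)
    (hy : y ∈ gr k n) : br k x y = br k y x := by
  have h := bracket_antisymm (k := k) m n x y hx hy
  rw [(hm.mul hn).neg_one_zpow, neg_one_smul, neg_neg] at h
  exact h.symm

theorem ad_mem {e x : A} {n : ℤ} (he : e ∈ gr k 0) (hx : x ∈ gr k n) : ad k e x ∈ gr k n := by
  have h := bracket_mem (k := k) 0 n e x he hx
  rwa [zero_add] at h

theorem ad_br {e x y : A} {m n : ℤ} (he : e ∈ gr k 0) (hx : x ∈ gr k m) (hy : y ∈ gr k n) :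
    ad k e (br k x y) = br k (ad k e x) y + br k x (ad k e y) := by
  have hj := jacobi (k := k) m n 0 x y e hx hy he
  have hye := bracket_antisymm (k := k) 0 n e y he hy
  have hxye := bracket_antisymm (k := k) 0 (m + n) e _ he (bracket_mem (k := k) m n x y hx hy)
  have heyx := bracket_antisymm (k := k) m n x (bracket (k := k) e y) hx (ad_mem he hy)
  have hsq : (-1 : k) ^ (m * n) * (-1) ^ (m * n) = 1 := by rw [← mul_zpow]; norm_num
  simp only [mul_zero, zero_mul, zpow_zero, one_smul] at hj hye hxye
  simp only [hye, hxye, map_neg, LinearMap.neg_apply, heyx, neg_neg, smul_smul, hsq, one_smul]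
    at hj
  simp only [br, ad]
  linear_combination (norm := module) -hj

theorem D_ad {e : A} (he : e ∈ gr k 0) (x : A) :
    D k (ad k e x) = br k (D k e) x + ad k e (D k x) := by
  have h := leibniz (k := k) 0 e x he
  rwa [zpow_zero, one_smul] at h

variable (k) in
/-- The coefficients of `κ(u(t))` for `u(t) = ∑ uₙ tⁿ`. -/
noncomputable def curvCoeff (u : ℕ → A) (n : ℕ) : A :=
  D k (u n) + (2⁻¹ : k) • ∑ p ∈ antidiagonal n, br k (u p.1) (u p.2)

theorem curvCoeff_zero (u : ℕ → A) : curvCoeff k u 0 = curv k (u 0) := by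
  simp [curvCoeff, curv]

theorem curv_sum_eq_sum_curvCoeff {u : ℕ → A} {N : ℕ} (hu : ∀ n, N < n → u n = 0) :
    curv k (∑ n ∈ range (N + 1), u n) = ∑ n ∈ range (2 * N + 1), curvCoeff k u n := by
  have hD : ∑ n ∈ range (N + 1), D k (u n) = ∑ n ∈ range (2 * N + 1), D k (u n) :=
    sum_subset (range_subset_range.mpr (by omega)) fun n _ hn ↦ by
      rw [hu n (by simpa using hn), map_zero]
  have hbr : br k (∑ n ∈ range (N + 1), u n) (∑ n ∈ range (N + 1), u n)
      = ∑ i ∈ range (N + 1), ∑ j ∈ range (N + 1), br k (u i) (u j) := by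
    simp only [br, map_sum, LinearMap.sum_apply]
    exact sum_comm
  rw [curv, map_sum, hD, hbr, sum_range_sum_range_eq_sum_antidiagonal]
  · simp only [curvCoeff, sum_add_distrib, smul_sum]
  · rintro i j (hi | hj)
    · simp [hu i hi, br]
    · simp [hu j hj, br]

theorem ad_sum_antidiagonal {e : A} {u : ℕ → A} (he : e ∈ gr k 0) (hu : ∀ n, u n ∈ gr k (-1))
    (n : ℕ) : ad k e (∑ p ∈ antidiagonal n, br k (u p.1) (u p.2))
      = (2 : k) • ∑ p ∈ antidiagonal n, br k (ad k e (u p.1)) (u p.2) := by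
  simp only [map_sum, ad_br he (hu _) (hu _), sum_add_distrib, two_smul]
  congr 1
  rw [← Nat.sum_antidiagonal_swap]
  exact sum_congr rfl fun p _ ↦ br_comm_of_odd odd_neg_one odd_neg_one (hu _) (ad_mem he (hu _))

theorem succ_smul_curvCoeff_succ {e : A} {u : ℕ → A} (he : e ∈ gr k 0)
    (hu : ∀ n, u n ∈ gr k (-1))
    (hrec : ∀ n : ℕ, ((n : k) + 1) • u (n + 1) = -ad k e (u n) + if n = 0 then D k e else 0)
    (n : ℕ) : ((n : k) + 1) • curvCoeff k u (n + 1) = -ad k e (curvCoeff k u n) := by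
  have hD : ((n : k) + 1) • D k (u (n + 1)) = -br k (D k e) (u n) - ad k e (D k (u n)) := by
    rw [← map_smul, hrec, map_add, map_neg, D_ad he, apply_ite (D k),
      show D k (D k e) = 0 from d_sq e, map_zero, ite_self]
    abel
  have hQ : ((n : k) + 1) • ∑ p ∈ antidiagonal (n + 1), br k (u p.1) (u p.2)
      = (2 : k) • (br k (D k e) (u n) - ∑ p ∈ antidiagonal n, br k (ad k e (u p.1)) (u p.2)) := by
    have h := succ_smul_sum_antidiagonal_succ (bracket (k := k) (A := A)) (u := u)
      (fun i j ↦ br_comm_of_odd odd_neg_one odd_neg_one (hu i) (hu j)) n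
    simp only [hrec, map_add, map_neg, LinearMap.add_apply, LinearMap.neg_apply, sum_add_distrib,
      sum_neg_distrib] at h
    have hite : ∑ p ∈ antidiagonal n, bracket (k := k) (if p.1 = 0 then D k e else 0) (u p.2)
        = br k (D k e) (u n) := by
      rw [Nat.sum_antidiagonal_eq_sum_range_succ_mk, sum_range_succ']
      simp [br]
    rw [hite, neg_add_eq_sub] at h
    exact h
  rw [curvCoeff, curvCoeff, smul_add, hD, smul_comm, hQ, map_add, map_smul,
    ad_sum_antidiagonal he hu]
  module

end DGLA

open DGLA in
/-- curvature transport under flow. In a DGLA over a field `k` of characteristic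
zero, for arbitrary `a ∈ A₋₁` and `e ∈ A₀` with nilpotent adjoint action (`(ad_e)^N = 0`),
the curvature `κ(x) = ∂x + (1/2)[x,x]` satisfies `κ(u_e(a)) = exp(−ad_e)(κ(a))`. -/
theorem curv_flow_eq_expNeg_curv {k A : Type*} [Field k] [CharZero k]
    [AddCommGroup A] [Module k A] [DGLA k A]
    (a e : A) (ha : a ∈ gr k (-1)) (he : e ∈ gr k 0)
    (N : ℕ) (hN : ad k e ^ N = 0) :
    curv k (flow k e N a) = expNeg k (ad k e) N (curv k a) := by
  set u := flowCoeff (ad k e) a (D k e)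
  have hu : ∀ n, u n ∈ gr k (-1) := flowCoeff_mem (fun _ ↦ ad_mem he) ha (d_mem (k := k) 0 e he)
  have hcurv : ∀ n, curvCoeff k u n = expNegCoeff (ad k e) n (curv k a) := fun n ↦ by
    rw [eq_expNegCoeff_of_succ_smul
      (succ_smul_curvCoeff_succ he hu (succ_smul_flowCoeff_succ _ _ _)) n, curvCoeff_zero]
    rfl
  rw [flow, ← sum_flowCoeff hN, curv_sum_eq_sum_curvCoeff fun n hn ↦ flowCoeff_eq_zero hN hn _ _,
    expNeg_apply_eq_sum hN (by omega : N ≤ 2 * N + 1)]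
  exact sum_congr rfl fun n _ ↦ hcurv n
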